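/- Every finitely generated residually finite group is Hopfian, i.e., every surjective endomorphism of such a group is an isomorphism. -/

import Mathlib

/-!
Fix a finite group `F`. Since `G` is finitely generated, `Hom(G, F)` is finite, and precomposition
with a surjection `f : G → G` is an injective self-map of it, hence a bijection. So every
`φ : G → F` factors as `ψ ∘ f`, which forces `ker f ≤ ker φ`. Residual finiteness says that the
kernels of maps to finite groups meet in `1`, so `ker f` is trivial.
-/

instance MonoidHom.finite_of_fg {M N : Type*} [Monoid M] [Monoid N] [Monoid.FG M] [Finite N] :
    Finite (M →* N) := by
  obtain ⟨S, hS⟩ := Monoid.fg_def.mp ‹_›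
  refine Finite.of_injective (fun φ : M →* N ↦ fun s : S ↦ φ s) fun φ ψ h ↦ ?_
  exact MonoidHom.eq_of_eqOn_denseM hS fun x hx ↦ congrFun h ⟨x, hx⟩

theorem MonoidHom.ker_le_ker_of_surjective {G F : Type*} [Group G] [Group F] [Group.FG G]
    [Finite F] {f : G →* G} (hf : Function.Surjective f) (φ : G →* F) : f.ker ≤ φ.ker := by
  have hcomp : Function.Injective (fun ψ : G →* F ↦ ψ.comp f) :=
    fun _ _ h ↦ (MonoidHom.cancel_right hf).mp h
  obtain ⟨ψ, rfl⟩ := Finite.surjective_of_injective hcomp φ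
  rw [← MonoidHom.comap_ker]
  exact Subgroup.comap_mono bot_le

theorem MonoidHom.injective_of_surjective_of_residuallyFinite {G : Type*} [Group G] [Group.FG G]
    [Group.ResiduallyFinite G] {f : G →* G} (hf : Function.Surjective f) :
    Function.Injective f := by
  refine (MonoidHom.ker_eq_bot_iff f).mp (eq_bot_iff.mpr ?_)
  rw [← Group.ResiduallyFinite.iInf_eq_bot]
  refine le_iInf fun H ↦ ?_
  simpa using MonoidHom.ker_le_ker_of_surjective hf (QuotientGroup.mk' H.toSubgroup)

/-- Every finitely generated residually finite group is Hopfian: every surjective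
endomorphism is an isomorphism (bijective).  Residual finiteness: for every `g ≠ 1`
there is a finite group `F` and a homomorphism `φ : G →* F` with `φ g ≠ 1`. -/
theorem hopfian_of_fg_residually_finite {G : Type} [Group G]
    (hfg : Group.FG G)
    (hrf : ∀ g : G, g ≠ 1 →
      ∃ (F : Type) (_ : Group F) (_ : Finite F) (φ : G →* F), φ g ≠ 1)
    (f : G →* G) (hf : Function.Surjective f) :
    Function.Bijective f :=
  have := Group.residuallyFinite_of_forall_exists_finite_monoidHom hrf
  ⟨MonoidHom.injective_of_surjective_of_residuallyFinite hf, hf⟩
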